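/- arXiv:2409.10669 — 4 statements merged into one kernel-verified Lean document; each statement's English description precedes it below -/
import Mathlib

section
/- Let H be an n×n real symmetric positive semidefinite matrix with eigenvalues λ₁ ≥ λ₂ ≥ … ≥ λₙ (counted with multiplicity, in nonincreasing order), and let k be a natural number with k < n. Then for every n×k real matrix P with orthonormal columns (PᵀP = I_k), there exists a unit vector z ∈ ℝⁿ such that the residual quadratic form satisfies zᵀ(I − PPᵀ)H(I − PPᵀ)z ≥ λ_{k+1}. Equivalently, the supremum over unit vectors z of zᵀ(I − PPᵀ)ᵀH(I − PPᵀ)z is at least λ_{k+1}. -/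
/-!
The conditions `Pᵀ (U w) = 0` and `w j = 0` for `j > k` are `k + (n - k - 1) < n` linear
constraints on `w ∈ ℝⁿ`, so some unit vector `w` meets them. Then `z = U w` is a unit vector
orthogonal to the columns of `P`, so `I - P Pᵀ` fixes it, and
`zᵀ H z = ∑_{j ≤ k} λ_j w_j² ≥ λ_{k+1}`.
-/

open Matrix

theorem Matrix.exists_dotProduct_self_eq_one_mulVec_eq_zero {m o : Type*} [Fintype m]
    [Fintype o] (A : Matrix m o ℝ) (h : Fintype.card m < Fintype.card o) :
    ∃ c : o → ℝ, c ⬝ᵥ c = 1 ∧ A *ᵥ c = 0 := by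
  obtain ⟨c, hc, hc0⟩ := (Submodule.ne_bot_iff _).mp <|
    LinearMap.ker_ne_bot_of_finrank_lt (f := A.mulVecLin) (by simpa using h)
  have hpos : 0 < c ⬝ᵥ c :=
    lt_of_le_of_ne (dotProduct_self_star_nonneg c) (Ne.symm (dotProduct_self_eq_zero.not.mpr hc0))
  refine ⟨(√(c ⬝ᵥ c))⁻¹ • c, ?_, ?_⟩
  · rw [smul_dotProduct, dotProduct_smul, smul_smul, smul_eq_mul, ← mul_inv,
      Real.mul_self_sqrt hpos.le, inv_mul_cancel₀ hpos.ne']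
  · rw [mulVec_smul, ← mulVecLin_apply, LinearMap.mem_ker.mp hc, smul_zero]

theorem Matrix.mul_le_dotProduct_diagonal_mulVec {ι : Type*} [Fintype ι] [LinearOrder ι]
    {lam w : ι → ℝ} (hlam : Antitone lam) (i : ι) (hw : ∀ j, i < j → w j = 0) :
    lam i * (w ⬝ᵥ w) ≤ w ⬝ᵥ diagonal lam *ᵥ w := by
  simp only [dotProduct, mulVec_diagonal, Finset.mul_sum]
  refine Finset.sum_le_sum fun j _ => ?_
  rcases le_or_gt j i with hji | hij
  · nlinarith [hlam hji, mul_self_nonneg (w j)]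
  · simp [hw j hij]

theorem Matrix.dotProduct_mul_mul_transpose_mulVec {m o R : Type*} [Fintype m] [Fintype o]
    [CommSemiring R] (U : Matrix m o R) (D : Matrix o o R) (z : m → R) :
    z ⬝ᵥ (U * D * Uᵀ) *ᵥ z = (Uᵀ *ᵥ z) ⬝ᵥ D *ᵥ (Uᵀ *ᵥ z) := by
  rw [← mulVec_mulVec, ← mulVec_mulVec, dotProduct_mulVec, mulVec_transpose]

theorem Matrix.mulVec_dotProduct_mulVec_of_transpose_mul_self {m o R : Type*} [Fintype m]
    [Fintype o] [DecidableEq o] [CommSemiring R]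
    {U : Matrix m o R} (hU : Uᵀ * U = 1) (v w : o → R) :
    (U *ᵥ v) ⬝ᵥ (U *ᵥ w) = v ⬝ᵥ w := by
  rw [dotProduct_mulVec, ← mulVec_transpose, mulVec_mulVec, hU, one_mulVec]

theorem Matrix.dotProduct_rejection_mulVec_of_transpose_mulVec_eq_zero {m k R : Type*}
    [Fintype m] [Fintype k] [DecidableEq m] [CommRing R]
    (P : Matrix m k R) (H : Matrix m m R) {z : m → R} (hz : Pᵀ *ᵥ z = 0) :
    z ⬝ᵥ ((1 - P * Pᵀ) * H * (1 - P * Pᵀ)) *ᵥ z = z ⬝ᵥ H *ᵥ z := by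
  have hfix : (1 - P * Pᵀ) *ᵥ z = z := by
    rw [sub_mulVec, one_mulVec, ← mulVec_mulVec, hz, mulVec_zero, sub_zero]
  have hfix' : z ᵥ* (1 - P * Pᵀ) = z := by
    rw [← mulVec_transpose, transpose_sub, transpose_one, transpose_mul, transpose_transpose, hfix]
  rw [← mulVec_mulVec, hfix, dotProduct_mulVec, ← vecMul_vecMul, hfix', dotProduct_mulVec]

theorem residual_quadratic_form_lower_bound_general
    (n k : ℕ) (hk : k < n)
    (H : Matrix (Fin n) (Fin n) ℝ)
    (lam : Fin n → ℝ) (U : Matrix (Fin n) (Fin n) ℝ)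
    (hU : Uᵀ * U = 1) (hdecomp : H = U * Matrix.diagonal lam * Uᵀ)
    (hlam : Antitone lam)
    (P : Matrix (Fin n) (Fin k) ℝ) :
    ∃ z : Fin n → ℝ, z ⬝ᵥ z = 1 ∧
      lam ⟨k, hk⟩ ≤
        z ⬝ᵥ (((1 - P * Pᵀ) * H * (1 - P * Pᵀ)).mulVec z) := by
  set i : Fin n := ⟨k, hk⟩ with hi
  let coords : Matrix (Set.Ioi i) (Fin n) ℝ := (1 : Matrix (Fin n) (Fin n) ℝ).submatrix (↑) id
  have hcard : Fintype.card (Fin k ⊕ Set.Ioi i) < n := by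
    simp only [Fintype.card_sum, Fintype.card_fin, Fintype.card_Ioi, Fin.card_Ioi, hi]
    omega
  obtain ⟨w, hw, hAw⟩ :=
    exists_dotProduct_self_eq_one_mulVec_eq_zero (fromRows (Pᵀ * U) coords) (by simpa using hcard)
  rw [fromRows_mulVec, ← Sum.elim_zero_zero, Sum.elim_eq_iff] at hAw
  obtain ⟨hPUw, hcoords⟩ := hAw
  have hPw : Pᵀ *ᵥ (U *ᵥ w) = 0 := by rw [mulVec_mulVec, hPUw]
  have hsupp : ∀ j, i < j → w j = 0 := fun j hj => by
    simpa [coords, mulVec, dotProduct, one_apply] using congrFun hcoords ⟨j, hj⟩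
  refine ⟨U *ᵥ w, by rw [mulVec_dotProduct_mulVec_of_transpose_mul_self hU, hw], ?_⟩
  rw [dotProduct_rejection_mulVec_of_transpose_mulVec_eq_zero P H hPw, hdecomp,
    dotProduct_mul_mul_transpose_mulVec, mulVec_mulVec, hU, one_mulVec]
  simpa [hw] using mul_le_dotProduct_diagonal_mulVec hlam i hsupp

/-- **Lower bound half of the residual quadratic form claim.**
`H` is an `n × n` real symmetric positive semidefinite matrix with eigendecomposition
`H = U * diagonal lam * Uᵀ` (`U` orthogonal), eigenvalues `lam` nonincreasing (with
multiplicity).  For every `n × k` matrix `P` with orthonormal columns (`Pᵀ * P = 1`)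
there is a unit vector `z` (`z ⬝ᵥ z = 1`, i.e. Euclidean norm one) with
`zᵀ (I - P Pᵀ) H (I - P Pᵀ) z ≥ lam ⟨k, hk⟩` (the `(k+1)`-st eigenvalue, 0-indexed). -/
theorem residual_quadratic_form_lower_bound
    (n k : ℕ) (hk : k < n)
    (H : Matrix (Fin n) (Fin n) ℝ) (hH : H.PosSemidef)
    (lam : Fin n → ℝ) (U : Matrix (Fin n) (Fin n) ℝ)
    (hU : Uᵀ * U = 1) (hdecomp : H = U * Matrix.diagonal lam * Uᵀ)
    (hlam : Antitone lam)
    (P : Matrix (Fin n) (Fin k) ℝ) (hP : Pᵀ * P = 1) :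
    ∃ z : Fin n → ℝ, z ⬝ᵥ z = 1 ∧
      lam ⟨k, hk⟩ ≤
        z ⬝ᵥ (((1 - P * Pᵀ) * H * (1 - P * Pᵀ)).mulVec z) :=
  residual_quadratic_form_lower_bound_general n k hk H lam U hU hdecomp hlam P
end

section
/- Let H be an n×n real symmetric positive semidefinite matrix with eigenvalues λ₁ ≥ λ₂ ≥ … ≥ λₙ (counted with multiplicity, in nonincreasing order), and let k be a natural number with k < n. If P is an n×k real matrix whose columns are pairwise orthonormal eigenvectors of H corresponding to the k largest eigenvalues λ₁, …, λ_k, then for every vector z ∈ ℝⁿ with ‖z‖ ≤ 1, the residual quadratic form satisfies zᵀ(I − PPᵀ)H(I − PPᵀ)z ≤ λ_{k+1}. -/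
open Matrix

/-! Index eigenvalues from `0`, so `λₖ = lam ⟨k, hk⟩`. In the eigenbasis of `H` the residual form
is `∑ i, λᵢ cᵢ²` with `c = Uᵀ (1 - P Pᵀ) z`, and `‖c‖ ≤ ‖z‖ ≤ 1`. An eigenvector of `H` for `λ` has
eigenbasis coordinates only where `λᵢ = λ`, so the columns of `Uᵀ P` belonging to the indices
`T = {i | λₖ < λᵢ}` (which all lie below `k`) are `|T|` orthonormal vectors supported on `T`, hence
span `ℝ^T`. Since `c` is orthogonal to every column of `Uᵀ P`, it vanishes on `T`, and
`∑ i, λᵢ cᵢ² ≤ λₖ ‖c‖² ≤ λₖ` because `λₖ ≥ 0`. -/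

namespace Matrix

variable {ι κ R : Type*}

lemma transpose_one_sub_mul_transpose [Fintype κ] [DecidableEq ι] [CommRing R]
    (P : Matrix ι κ R) : (1 - P * Pᵀ)ᵀ = 1 - P * Pᵀ := by
  rw [transpose_sub, transpose_one, transpose_mul, transpose_transpose]

lemma transpose_mul_one_sub_mul_transpose [Fintype ι] [Fintype κ] [DecidableEq ι]
    [DecidableEq κ] [CommRing R] {P : Matrix ι κ R} (hP : Pᵀ * P = 1) :
    Pᵀ * (1 - P * Pᵀ) = 0 := by
  rw [Matrix.mul_sub, Matrix.mul_one, ← Matrix.mul_assoc, hP, Matrix.one_mul, sub_self]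

lemma dotProduct_mulVec_transpose_mul_mul [Fintype ι] [CommRing R] (A H : Matrix ι ι R)
    (z : ι → R) : z ⬝ᵥ (Aᵀ * H * A) *ᵥ z = A *ᵥ z ⬝ᵥ H *ᵥ (A *ᵥ z) := by
  rw [← mulVec_mulVec, ← mulVec_mulVec, dotProduct_mulVec, ← mulVec_transpose,
    transpose_transpose]

lemma dotProduct_mulVec_mul_diagonal_mul_transpose [Fintype ι] [DecidableEq ι] [CommRing R]
    (U : Matrix ι ι R) (d w : ι → R) :
    w ⬝ᵥ (U * diagonal d * Uᵀ) *ᵥ w = ∑ i, d i * (Uᵀ *ᵥ w) i ^ 2 := by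
  have h := dotProduct_mulVec_transpose_mul_mul Uᵀ (diagonal d) w
  rw [transpose_transpose] at h
  rw [h]
  simp only [dotProduct, mulVec_diagonal]
  exact Finset.sum_congr rfl fun i _ => by ring

lemma transpose_mulVec_dotProduct_self [Fintype ι] [DecidableEq ι] [CommRing R]
    {U : Matrix ι ι R} (hU : U * Uᵀ = 1) (w : ι → R) : Uᵀ *ᵥ w ⬝ᵥ Uᵀ *ᵥ w = w ⬝ᵥ w := by
  rw [dotProduct_mulVec, ← mulVec_transpose, transpose_transpose, mulVec_mulVec, hU,
    one_mulVec]

lemma transpose_mulVec_apply_eq_zero_of_mulVec_eq_smul [Fintype ι] [DecidableEq ι]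
    [CommRing R] [IsDomain R] {U : Matrix ι ι R} (hU : Uᵀ * U = 1) {d v : ι → R} {μ : R}
    (hv : (U * diagonal d * Uᵀ) *ᵥ v = μ • v) {i : ι} (hi : d i ≠ μ) :
    (Uᵀ *ᵥ v) i = 0 := by
  have hdiag : diagonal d *ᵥ (Uᵀ *ᵥ v) = μ • (Uᵀ *ᵥ v) := by
    rw [← mulVec_smul, ← hv, mulVec_mulVec, mulVec_mulVec, ← Matrix.mul_assoc,
      ← Matrix.mul_assoc, hU, Matrix.one_mul]
  have h := congrFun hdiag i
  rw [mulVec_diagonal, Pi.smul_apply, smul_eq_mul] at h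
  exact (mul_eq_mul_right_iff.mp h).resolve_left hi

lemma apply_eq_zero_of_orthogonal_to_columns_supported [Fintype ι] [DecidableEq ι]
    [DecidableEq κ] [CommRing R] {p : ι → Prop} [DecidablePred p] {b : Matrix ι κ R}
    (hb : bᵀ * b = 1) {c : ι → R} (hc : bᵀ *ᵥ c = 0) {f : {i // p i} → κ}
    (hf : Function.Injective f) (hsupp : ∀ i j, ¬ p i → b i (f j) = 0) :
    ∀ i, p i → c i = 0 := by
  have sum_restrict : ∀ g : ι → R, (∀ i, ¬ p i → g i = 0) →
      ∑ i : {i // p i}, g i = ∑ i, g i := fun g hg => by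
    rw [← Fintype.sum_subtype_add_sum_subtype p g,
      Fintype.sum_eq_zero (fun i : {i // ¬ p i} => g i) (fun i => hg i i.2), add_zero]
  set B : Matrix {i // p i} {i // p i} R := b.submatrix Subtype.val f
  have hB : Bᵀ * B = 1 := by
    ext j j'
    simp only [mul_apply, transpose_apply, B, submatrix_apply]
    rw [sum_restrict (fun i => b i (f j) * b i (f j')) (fun i hi => by simp [hsupp i j hi])]
    trans (bᵀ * b) (f j) (f j')
    · simp only [mul_apply, transpose_apply]
    · simp only [hb, one_apply, hf.eq_iff]
  have hBc : Bᵀ *ᵥ (fun i : {i // p i} => c i) = 0 := by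
    ext j
    calc (Bᵀ *ᵥ fun i => c i) j = (bᵀ *ᵥ c) (f j) :=
          sum_restrict (fun i => b i (f j) * c i) (fun i hi => by simp [hsupp i j hi])
      _ = 0 := by rw [hc, Pi.zero_apply]
  intro i hi
  -- `B` is square, so `Bᵀ * B = 1` forces `B * Bᵀ = 1`.
  have hc0 : (fun i : {i // p i} => c i) = 0 := by
    rw [← one_mulVec (fun i : {i // p i} => c i), ← mul_eq_one_comm.mp hB, ← mulVec_mulVec,
      hBc, mulVec_zero]
  exact congrFun hc0 ⟨i, hi⟩

lemma one_sub_mul_transpose_mulVec_dotProduct_self_le [Fintype ι] [Fintype κ] [DecidableEq ι]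
    [DecidableEq κ] [CommRing R] [LinearOrder R] [IsStrictOrderedRing R] {P : Matrix ι κ R}
    (hP : Pᵀ * P = 1) (z : ι → R) :
    (1 - P * Pᵀ) *ᵥ z ⬝ᵥ (1 - P * Pᵀ) *ᵥ z ≤ z ⬝ᵥ z := by
  have hidem : (1 - P * Pᵀ) * (1 - P * Pᵀ) = 1 - P * Pᵀ := by
    rw [Matrix.sub_mul, Matrix.one_mul, Matrix.mul_assoc, transpose_mul_one_sub_mul_transpose hP,
      Matrix.mul_zero, sub_zero]
  have h := dotProduct_mulVec_transpose_mul_mul (1 - P * Pᵀ) 1 z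
  rw [transpose_one_sub_mul_transpose, Matrix.mul_one, hidem, one_mulVec] at h
  rw [← h, sub_mulVec, one_mulVec, dotProduct_sub, ← mulVec_mulVec, dotProduct_mulVec,
    ← mulVec_transpose, sub_le_self_iff]
  exact Finset.sum_nonneg fun i _ => mul_self_nonneg _

lemma nonneg_of_posSemidef_mul_diagonal_mul_transpose [Fintype ι] [DecidableEq ι]
    {U : Matrix ι ι ℝ} (hU : Uᵀ * U = 1) {d : ι → ℝ}
    (hH : (U * diagonal d * Uᵀ).PosSemidef) (i : ι) : 0 ≤ d i := by
  have hdiag : diagonal d = Uᵀ * (U * diagonal d * Uᵀ) * U := by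
    rw [← Matrix.mul_assoc, ← Matrix.mul_assoc, hU, Matrix.one_mul, Matrix.mul_assoc, hU,
      Matrix.mul_one]
  have hpsd : (diagonal d).PosSemidef := by
    rw [hdiag, ← conjTranspose_eq_transpose_of_trivial]
    exact hH.conjTranspose_mul_mul_same U
  exact posSemidef_diagonal_iff.mp hpsd i

end Matrix

lemma sum_mul_sq_le_mul_dotProduct_self {ι R : Type*} [Fintype ι] [CommRing R] [LinearOrder R]
    [IsStrictOrderedRing R] {d c : ι → R} {μ : R}
    (h : ∀ i, μ < d i → c i = 0) : ∑ i, d i * c i ^ 2 ≤ μ * (c ⬝ᵥ c) := by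
  rw [dotProduct, Finset.mul_sum]
  refine Finset.sum_le_sum fun i _ => ?_
  by_cases hi : μ < d i
  · simp [h i hi]
  · rw [← sq]
    exact mul_le_mul_of_nonneg_right (not_lt.mp hi) (sq_nonneg _)

/-- **Attainment half of the residual quadratic form claim.**
`H` is an `n × n` real symmetric positive semidefinite matrix with eigendecomposition
`H = U * diagonal lam * Uᵀ` (`U` orthogonal), eigenvalues `lam` nonincreasing (with
multiplicity).  If the columns of `P` are pairwise orthonormal (`Pᵀ * P = 1`)
eigenvectors of `H` for the `k` largest eigenvalues, then for every vector `z` with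
Euclidean norm at most one (`z ⬝ᵥ z ≤ 1`) the residual quadratic form satisfies
`zᵀ (I - P Pᵀ) H (I - P Pᵀ) z ≤ lam ⟨k, hk⟩` (the `(k+1)`-st eigenvalue, 0-indexed). -/
theorem residual_quadratic_form_upper_bound
    (n k : ℕ) (hk : k < n)
    (H : Matrix (Fin n) (Fin n) ℝ) (hH : H.PosSemidef)
    (lam : Fin n → ℝ) (U : Matrix (Fin n) (Fin n) ℝ)
    (hU : Uᵀ * U = 1) (hdecomp : H = U * Matrix.diagonal lam * Uᵀ)
    (hlam : Antitone lam)
    (P : Matrix (Fin n) (Fin k) ℝ) (hP : Pᵀ * P = 1)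
    (hPeig : ∀ j : Fin k, H.mulVec (fun i => P i j)
        = lam (Fin.castLE hk.le j) • (fun i => P i j)) :
    ∀ z : Fin n → ℝ, z ⬝ᵥ z ≤ 1 →
      z ⬝ᵥ (((1 - P * Pᵀ) * H * (1 - P * Pᵀ)).mulVec z) ≤ lam ⟨k, hk⟩ := by
  intro z hz
  subst hdecomp
  have hUUt : U * Uᵀ = 1 := mul_eq_one_comm.mp hU
  set μ := lam ⟨k, hk⟩
  set w := (1 - P * Pᵀ) *ᵥ z
  have hvanish : ∀ i, μ < lam i → (Uᵀ *ᵥ w) i = 0 := by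
    refine apply_eq_zero_of_orthogonal_to_columns_supported (b := Uᵀ * P)
      (f := fun i => ⟨i, hlam.reflect_lt i.2⟩) ?_ ?_ ?_ ?_
    · rw [transpose_mul, transpose_transpose, Matrix.mul_assoc, ← Matrix.mul_assoc U, hUUt,
        Matrix.one_mul, hP]
    · rw [transpose_mul, transpose_transpose, mulVec_mulVec, Matrix.mul_assoc, hUUt,
        Matrix.mul_one, mulVec_mulVec, transpose_mul_one_sub_mul_transpose hP, zero_mulVec]
    · exact fun i j h => Subtype.ext (Fin.ext (Fin.mk.inj h))
    · exact fun i j hi => transpose_mulVec_apply_eq_zero_of_mulVec_eq_smul hU (hPeig _)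
        ((not_lt.mp hi).trans_lt j.2).ne
  calc z ⬝ᵥ ((1 - P * Pᵀ) * (U * diagonal lam * Uᵀ) * (1 - P * Pᵀ)) *ᵥ z
      = ∑ i, lam i * (Uᵀ *ᵥ w) i ^ 2 := by
        nth_rewrite 1 [← transpose_one_sub_mul_transpose P]
        rw [dotProduct_mulVec_transpose_mul_mul, dotProduct_mulVec_mul_diagonal_mul_transpose]
    _ ≤ μ * (Uᵀ *ᵥ w ⬝ᵥ Uᵀ *ᵥ w) := sum_mul_sq_le_mul_dotProduct_self hvanish
    _ = μ * (w ⬝ᵥ w) := by rw [transpose_mulVec_dotProduct_self hUUt]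
    _ ≤ μ * 1 := by
        gcongr
        · exact nonneg_of_posSemidef_mul_diagonal_mul_transpose hU hH _
        · exact (one_sub_mul_transpose_mulVec_dotProduct_self_le hP z).trans hz
    _ = μ := mul_one μ
end

section
/- Let ℓ be a twice continuously differentiable real-valued function on the space of m×n real matrices, let W be an m×n real matrix with Dℓ(W) = 0, and define g(A, B) = ℓ(W + B·A) on the product space of k×n matrices and m×k matrices. Then for every k×n matrix A₀, the second Fréchet derivative of g at the point (A₀, 0), evaluated at directions (h₁, u₁) and (h₂, u₂) (with hᵢ k×n matrices and uᵢ m×k matrices), equals D²ℓ(W) evaluated at the pair of directions (u₁·A₀, u₂·A₀). -/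
/-!
By the second-order chain rule,
`D²(ℓ ∘ φ) p (v, w) = D²ℓ (φ p) (Dφ p v, Dφ p w) + Dℓ (φ p) (D²φ p v w)`.
For `φ (A, B) = W + B * A` we have `φ (A₀, 0) = W`, a critical point of `ℓ`, so the second term
vanishes; and `Dφ (A₀, 0) (h, u) = 0 * h + u * A₀ = u * A₀` because the `B`-factor is zero.
-/

open Topology

attribute [local instance] Matrix.normedAddCommGroup Matrix.normedSpace

section SecondOrderChainRule

variable {𝕜 E F G : Type*} [NontriviallyNormedField 𝕜]
  [NormedAddCommGroup E] [NormedSpace 𝕜 E] [NormedAddCommGroup F] [NormedSpace 𝕜 F]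
  [NormedAddCommGroup G] [NormedSpace 𝕜 G]

theorem fderiv_fderiv_comp_apply {f : F → G} {g : E → F} {x : E}
    (hf : ContDiffAt 𝕜 2 f (g x)) (hg : ContDiffAt 𝕜 2 g x) (v w : E) :
    fderiv 𝕜 (fderiv 𝕜 fun y => f (g y)) x v w =
      fderiv 𝕜 (fderiv 𝕜 f) (g x) (fderiv 𝕜 g x v) (fderiv 𝕜 g x w) +
        fderiv 𝕜 f (g x) (fderiv 𝕜 (fderiv 𝕜 g) x v w) := by
  have hfd : ∀ᶠ y in 𝓝 x, DifferentiableAt 𝕜 f (g y) :=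
    hg.continuousAt.eventually ((hf.eventually (by simp)).mono fun _ h =>
      h.differentiableAt (by simp))
  have hgd : ∀ᶠ y in 𝓝 x, DifferentiableAt 𝕜 g y :=
    (hg.eventually (by simp)).mono fun _ h => h.differentiableAt (by simp)
  have hchain : fderiv 𝕜 (fun y => f (g y)) =ᶠ[𝓝 x]
      fun y => (fderiv 𝕜 f (g y)).comp (fderiv 𝕜 g y) :=
    (hfd.and hgd).mono fun y h => fderiv_comp y h.1 h.2
  have hDf : HasFDerivAt (fun y => fderiv 𝕜 f (g y))
      ((fderiv 𝕜 (fderiv 𝕜 f) (g x)).comp (fderiv 𝕜 g x)) x :=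
    ((hf.fderiv_right (m := 1) (by norm_num)).differentiableAt (by simp)).hasFDerivAt.comp x
      (hg.differentiableAt (by simp)).hasFDerivAt
  have hDg : HasFDerivAt (fderiv 𝕜 g) (fderiv 𝕜 (fderiv 𝕜 g) x) x :=
    ((hg.fderiv_right (m := 1) (by norm_num)).differentiableAt (by simp)).hasFDerivAt
  rw [hchain.fderiv_eq, (hDf.clm_comp hDg).fderiv]
  simp [add_comm]

theorem fderiv_fderiv_comp_apply_of_fderiv_eq_zero {f : F → G} {g : E → F} {x : E} {y : F}
    (hx : g x = y) (hf : ContDiffAt 𝕜 2 f y) (hg : ContDiffAt 𝕜 2 g x)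
    (hcrit : fderiv 𝕜 f y = 0) (v w : E) :
    fderiv 𝕜 (fderiv 𝕜 fun y => f (g y)) x v w =
      fderiv 𝕜 (fderiv 𝕜 f) y (fderiv 𝕜 g x v) (fderiv 𝕜 g x w) := by
  subst hx
  simp [fderiv_fderiv_comp_apply hf hg, hcrit]

end SecondOrderChainRule

section MatrixProduct

variable {𝕜 l m n : Type*} [NontriviallyNormedField 𝕜] [CompleteSpace 𝕜]
  [Fintype l] [Fintype m] [Fintype n]

theorem Matrix.isBoundedBilinearMap_mul :
    IsBoundedBilinearMap 𝕜 (fun p : Matrix l m 𝕜 × Matrix m n 𝕜 => p.1 * p.2) :=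
  (LinearMap.toContinuousLinearMap (LinearMap.toContinuousLinearMap.toLinearMap ∘ₗ
    mulLinearMap 𝕜 : Matrix l m 𝕜 →ₗ[𝕜] Matrix m n 𝕜 →L[𝕜] Matrix l n 𝕜)).isBoundedBilinearMap

theorem Matrix.contDiff_const_add_snd_mul_fst (W : Matrix l n 𝕜) {N : WithTop ℕ∞} :
    ContDiff 𝕜 N (fun p : Matrix m n 𝕜 × Matrix l m 𝕜 => W + p.2 * p.1) :=
  contDiff_const.add Matrix.isBoundedBilinearMap_mul.symm.contDiff

theorem Matrix.fderiv_const_add_snd_mul_fst_apply (W : Matrix l n 𝕜)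
    (p v : Matrix m n 𝕜 × Matrix l m 𝕜) :
    fderiv 𝕜 (fun p : Matrix m n 𝕜 × Matrix l m 𝕜 => W + p.2 * p.1) p v =
      p.2 * v.1 + v.2 * p.1 := by
  have h := ((Matrix.isBoundedBilinearMap_mul (𝕜 := 𝕜)).symm.hasFDerivAt p).const_add W
  exact (DFunLike.congr_fun h.fderiv v).trans (by simp [add_comm])

end MatrixProduct

/-- **The Hessian of the LoRA-reparametrized loss at initialization (B–B block).**
If `ℓ` is `C²` and `Dℓ(W) = 0`, then for every `A₀`, the second Fréchet derivative of
`g (A, B) = ℓ (W + B * A)` at `(A₀, 0)`, evaluated at directions `(h₁, u₁)` and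
`(h₂, u₂)`, equals `D²ℓ(W)` evaluated at `(u₁ * A₀, u₂ * A₀)`. -/
theorem lora_hessian_at_init
    (m n k : ℕ) (ℓ : Matrix (Fin m) (Fin n) ℝ → ℝ)
    (hC2 : ContDiff ℝ 2 ℓ)
    (W : Matrix (Fin m) (Fin n) ℝ) (hgrad : fderiv ℝ ℓ W = 0) :
    ∀ (A₀ h₁ h₂ : Matrix (Fin k) (Fin n) ℝ) (u₁ u₂ : Matrix (Fin m) (Fin k) ℝ),
      fderiv ℝ
        (fderiv ℝ
          (fun p : Matrix (Fin k) (Fin n) ℝ × Matrix (Fin m) (Fin k) ℝ =>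
            ℓ (W + p.2 * p.1)))
        (A₀, (0 : Matrix (Fin m) (Fin k) ℝ)) (h₁, u₁) (h₂, u₂)
      = fderiv ℝ (fderiv ℝ ℓ) W (u₁ * A₀) (u₂ * A₀) := by
  intro A₀ h₁ h₂ u₁ u₂
  have hDφ := Matrix.fderiv_const_add_snd_mul_fst_apply W (A₀, (0 : Matrix (Fin m) (Fin k) ℝ))
  -- The goal and the lemmas reach the matrix norm instances along different defeq paths,
  -- so `rw` fails and the rewriting is done up to defeq by `trans` and `congrArg₂`.
  refine (fderiv_fderiv_comp_apply_of_fderiv_eq_zero (by simp) hC2.contDiffAt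
    (Matrix.contDiff_const_add_snd_mul_fst W).contDiffAt hgrad _ _).trans ?_
  exact congrArg₂ (fderiv ℝ (fderiv ℝ ℓ) W · ·)
    ((hDφ _).trans (by simp)) ((hDφ _).trans (by simp))
end

section
/- Let ℓ be a twice continuously differentiable real-valued function on the space of m×n real matrices, let W be an m×n real matrix with Dℓ(W) = 0, and define g(A, B) = ℓ(W + B·A) on the product space of k×n matrices and m×k matrices. Then for every k×n matrix A₀, the A–A block of the Hessian of g at (A₀, 0) vanishes: the second Fréchet derivative of g at (A₀, 0) evaluated at any pair of directions of the form (h₁, 0) and (h₂, 0), with h₁, h₂ k×n matrices, equals zero; likewise the mixed blocks vanish: it equals zero at any pair of directions (h₁, 0) and (0, u₂). -/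
/-! At `B = 0` the map `(A, B) ↦ W + B * A` sends the whole line `{(A, 0)}` to the critical point
`W` of `ℓ`, so by the chain rule the gradient of `g` vanishes identically along `B = 0`.
Differentiating this zero gradient in an `A`-direction `(h₁, 0)` gives
`D²g (A₀, 0) (h₁, 0) = 0`, which contains both the A–A and the mixed block. -/

open Matrix

/- Equip matrix spaces with a norm (all norms on these finite-dimensional spaces are
equivalent, so differentiability and Fréchet derivatives do not depend on this choice). -/
attribute [local instance] Matrix.normedAddCommGroup Matrix.normedSpace

section

variable {𝕜 E F G : Type*} [NontriviallyNormedField 𝕜]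
  [NormedAddCommGroup E] [NormedSpace 𝕜 E] [NormedAddCommGroup F] [NormedSpace 𝕜 F]
  [NormedAddCommGroup G] [NormedSpace 𝕜 G]

theorem fderiv_fderiv_apply_eq_zero_of_forall_add_smul {f : E → F} {x v : E}
    (hf : DifferentiableAt 𝕜 (fderiv 𝕜 f) x) (hline : ∀ t : 𝕜, fderiv 𝕜 f (x + t • v) = 0) :
    fderiv 𝕜 (fderiv 𝕜 f) x v = 0 := by
  rw [← hf.lineDeriv_eq_fderiv, lineDeriv]
  simp only [hline, deriv_const]

theorem fderiv_comp_eq_zero_of_fderiv_eq_zero {ℓ : F → G} {φ : E → F} {x : E}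
    (hℓ : DifferentiableAt 𝕜 ℓ (φ x)) (hφ : DifferentiableAt 𝕜 φ x)
    (hcrit : fderiv 𝕜 ℓ (φ x) = 0) :
    fderiv 𝕜 (ℓ ∘ φ) x = 0 := by
  rw [fderiv_comp x hℓ hφ, hcrit, ContinuousLinearMap.zero_comp]

end

theorem Matrix.contDiff_snd_mul_fst {𝕜 l m n : Type*} [NontriviallyNormedField 𝕜]
    [Fintype l] [Fintype m] [Fintype n] {N : WithTop ℕ∞} :
    ContDiff 𝕜 N (fun p : Matrix m n 𝕜 × Matrix l m 𝕜 => p.2 * p.1) := by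
  refine contDiff_pi.2 fun i => contDiff_pi.2 fun j => ?_
  simp only [Matrix.mul_apply]
  fun_prop

/-- **Vanishing A–A and mixed Hessian blocks of the LoRA-reparametrized loss.**
If `ℓ` is `C²` and `Dℓ(W) = 0`, then for every `A₀`, the second Fréchet derivative of
`g (A, B) = ℓ (W + B * A)` at the LoRA initialization `(A₀, 0)` vanishes on any pair of
directions `(h₁, 0), (h₂, 0)` (the A–A block) and on any pair `(h₁, 0), (0, u₂)`
(the mixed block). -/
theorem lora_hessian_AA_and_mixed_blocks_vanish
    (m n k : ℕ) (ℓ : Matrix (Fin m) (Fin n) ℝ → ℝ)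
    (hC2 : ContDiff ℝ 2 ℓ)
    (W : Matrix (Fin m) (Fin n) ℝ) (hgrad : fderiv ℝ ℓ W = 0) :
    ∀ (A₀ h₁ h₂ : Matrix (Fin k) (Fin n) ℝ) (u₂ : Matrix (Fin m) (Fin k) ℝ),
      fderiv ℝ
        (fderiv ℝ
          (fun p : Matrix (Fin k) (Fin n) ℝ × Matrix (Fin m) (Fin k) ℝ =>
            ℓ (W + p.2 * p.1)))
        (A₀, (0 : Matrix (Fin m) (Fin k) ℝ))
        (h₁, (0 : Matrix (Fin m) (Fin k) ℝ)) (h₂, (0 : Matrix (Fin m) (Fin k) ℝ)) = 0 ∧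
      fderiv ℝ
        (fderiv ℝ
          (fun p : Matrix (Fin k) (Fin n) ℝ × Matrix (Fin m) (Fin k) ℝ =>
            ℓ (W + p.2 * p.1)))
        (A₀, (0 : Matrix (Fin m) (Fin k) ℝ))
        (h₁, (0 : Matrix (Fin m) (Fin k) ℝ)) ((0 : Matrix (Fin k) (Fin n) ℝ), u₂) = 0 := by
  intro A₀ h₁ h₂ u₂
  set φ := fun p : Matrix (Fin k) (Fin n) ℝ × Matrix (Fin m) (Fin k) ℝ => W + p.2 * p.1
  have hφ : ContDiff ℝ 2 φ := contDiff_const.add Matrix.contDiff_snd_mul_fst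
  have hgrad_zero : ∀ A, fderiv ℝ (ℓ ∘ φ) (A, 0) = 0 := fun A => by
    have hφA : φ (A, 0) = W := by simp [φ]
    refine fderiv_comp_eq_zero_of_fderiv_eq_zero ?_ (hφ.differentiable two_ne_zero _) ?_
    · exact hφA ▸ hC2.differentiable two_ne_zero W
    · rwa [hφA]
  have hD2 : DifferentiableAt ℝ (fderiv ℝ (ℓ ∘ φ)) (A₀, 0) :=
    ((hC2.comp hφ).fderiv_right one_add_one_eq_two.le).differentiable one_ne_zero _
  have hAdir : fderiv ℝ (fderiv ℝ (ℓ ∘ φ)) (A₀, 0) (h₁, 0) = 0 := by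
    refine fderiv_fderiv_apply_eq_zero_of_forall_add_smul hD2 fun t => ?_
    have hline : ((A₀, 0) : _ × Matrix (Fin m) (Fin k) ℝ) + t • (h₁, 0) = (A₀ + t • h₁, 0) := by
      simp
    rw [hline]
    exact hgrad_zero _
  exact ⟨DFunLike.congr_fun hAdir _, DFunLike.congr_fun hAdir _⟩
end
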